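/- arXiv:2002.03053 — 5 statements merged into one kernel-verified Lean document; each statement's English description precedes it below -/
import Mathlib

section
/- Let X be a real Hilbert space and let F : X → ℝ be convex and Fréchet differentiable with L-Lipschitz gradient, and additionally γ-strongly convex for some γ ≥ 0. Then for every β > 0 and all x̄, z, x ∈ X one has ⟨∇F(z), x − x̄⟩ ≥ F(x) − F(x̄) + ((γ − βL²)/2)·‖x − x̄‖² − (1/(2β))·‖x − z‖². -/
/-!
Split `⟪∇F z, x - x̄⟫` as `⟪∇F x, x - x̄⟫ + ⟪∇F z - ∇F x, x - x̄⟫`. The first-order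
characterization of `γ`-strong convexity bounds the first term below by
`F x - F x̄ + γ/2 ‖x - x̄‖²`. By Cauchy–Schwarz and the Lipschitz bound, the second term is at
least `-L ‖x - z‖ ‖x - x̄‖`, and Young's inequality `a c ≤ a²/(2β) + β c²/2` with
`a = ‖x - z‖`, `c = L ‖x - x̄‖` turns this into the remaining two terms.
-/

open scoped InnerProductSpace

lemma mul_le_sq_div_add_mul_sq {β : ℝ} (hβ : 0 < β) (a c : ℝ) :
    a * c ≤ a ^ 2 / (2 * β) + β / 2 * c ^ 2 := by
  have h : a ^ 2 / (2 * β) + β / 2 * c ^ 2 - a * c = (a - β * c) ^ 2 / (2 * β) := by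
    field_simp
    ring
  rw [← sub_nonneg, h]
  positivity

lemma ConvexOn.add_fderiv_sub_le {E : Type*} [NormedAddCommGroup E] [NormedSpace ℝ E]
    {s : Set E} {f : E → ℝ} {f' : E →L[ℝ] ℝ} {a b : E}
    (hf : ConvexOn ℝ s f) (ha : a ∈ s) (hb : b ∈ s) (hf' : HasFDerivAt f f' a) :
    f a + f' (b - a) ≤ f b := by
  set g := AffineMap.lineMap (k := ℝ) a b
  have hg : ConvexOn ℝ (g ⁻¹' s) (f ∘ g) := hf.comp_affineMap g
  have hderiv : HasDerivAt (f ∘ g) (f' (b - a)) 0 := by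
    have hfg : HasFDerivAt f f' (g 0) := by simpa [g] using hf'
    exact hfg.comp_hasDerivAt 0 AffineMap.hasDerivAt_lineMap
  have := hg.le_slope_of_hasDerivAt (x := 0) (y := 1) (by simpa [g]) (by simpa [g]) one_pos hderiv
  simp only [g, slope_def_field, Function.comp_apply, AffineMap.lineMap_apply_zero,
    AffineMap.lineMap_apply_one, sub_zero, div_one] at this
  linarith

lemma StrongConvexOn.add_inner_add_norm_sq_le {X : Type*} [NormedAddCommGroup X]
    [InnerProductSpace ℝ X] [CompleteSpace X] {s : Set X} {f : X → ℝ} {f' : X} {m : ℝ}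
    {a b : X} (hf : StrongConvexOn s m f) (ha : a ∈ s) (hb : b ∈ s) (hf' : HasGradientAt f f' a) :
    f a + ⟪f', b - a⟫_ℝ + m / 2 * ‖b - a‖ ^ 2 ≤ f b := by
  have hderiv := hf'.hasFDerivAt.sub ((hasStrictFDerivAt_norm_sq a).hasFDerivAt.const_mul (m / 2))
  have := (strongConvexOn_iff_convex.1 hf).add_fderiv_sub_le ha hb hderiv
  simp only [sub_apply, smul_apply, InnerProductSpace.toDual_apply_apply, innerSL_apply_apply,
    smul_eq_mul, nsmul_eq_mul, Nat.cast_ofNat] at this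
  have hnorm : ‖b‖ ^ 2 = ‖a‖ ^ 2 + 2 * ⟪a, b - a⟫_ℝ + ‖b - a‖ ^ 2 := by
    simpa using norm_add_sq_real a (b - a)
  linear_combination this - m / 2 * hnorm

theorem smoothness_three_point_strongly_convex_general
    {X : Type*} [NormedAddCommGroup X] [InnerProductSpace ℝ X] [CompleteSpace X]
    (F : X → ℝ) (F' : X → X) (L γ : ℝ)
    (hFgrad : ∀ w : X, HasGradientAt F (F' w) w)
    (hFlip : ∀ w w' : X, ‖F' w - F' w'‖ ≤ L * ‖w - w'‖)
    (hFsc : ConvexOn ℝ Set.univ (fun w => F w - γ / 2 * ‖w‖ ^ 2))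
    (β : ℝ) (hβ : 0 < β)
    (xbar z x : X) :
    ⟪F' z, x - xbar⟫_ℝ ≥
      F x - F xbar + (γ - β * L ^ 2) / 2 * ‖x - xbar‖ ^ 2 - 1 / (2 * β) * ‖x - z‖ ^ 2 := by
  have hstrong : F x - F xbar + γ / 2 * ‖x - xbar‖ ^ 2 ≤ ⟪F' x, x - xbar⟫_ℝ := by
    have := (strongConvexOn_iff_convex.2 hFsc).add_inner_add_norm_sq_le (Set.mem_univ x)
      (Set.mem_univ xbar) (hFgrad x)
    rw [← neg_sub x xbar, inner_neg_right, norm_neg] at this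
    linarith
  have hcross : -(‖x - z‖ ^ 2 / (2 * β) + β / 2 * (L * ‖x - xbar‖) ^ 2) ≤
      ⟪F' z - F' x, x - xbar⟫_ℝ :=
    calc _ ≤ -(‖x - z‖ * (L * ‖x - xbar‖)) := neg_le_neg (mul_le_sq_div_add_mul_sq hβ _ _)
      _ ≤ -(‖F' z - F' x‖ * ‖x - xbar‖) := by
        rw [← mul_assoc, mul_comm ‖x - z‖, norm_sub_rev x z, neg_le_neg_iff]
        gcongr
        exact hFlip z x
      _ ≤ _ := neg_le_of_abs_le (abs_real_inner_le_norm _ _)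
  rw [inner_sub_left] at hcross
  linear_combination hstrong + hcross

/-- **Smoothness three-point inequality under strong convexity** (Lemma 2.3, second part):
for `γ`-strongly convex `F` with `L`-Lipschitz gradient and any `β > 0`,
`⟨∇F(z), x − x̄⟩ ≥ F(x) − F(x̄) + ((γ − βL²)/2)‖x − x̄‖² − (1/(2β))‖x − z‖²`. -/
theorem smoothness_three_point_strongly_convex
    {X : Type*} [NormedAddCommGroup X] [InnerProductSpace ℝ X] [CompleteSpace X]
    (F : X → ℝ) (F' : X → X) (L γ : ℝ) (hL : 0 ≤ L) (hγ : 0 ≤ γ)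
    (hFconv : ConvexOn ℝ Set.univ F)
    (hFgrad : ∀ w : X, HasGradientAt F (F' w) w)
    (hFlip : ∀ w w' : X, ‖F' w - F' w'‖ ≤ L * ‖w - w'‖)
    (hFsc : ConvexOn ℝ Set.univ (fun w => F w - γ / 2 * ‖w‖ ^ 2))
    (β : ℝ) (hβ : 0 < β)
    (xbar z x : X) :
    ⟪F' z, x - xbar⟫_ℝ ≥
      F x - F xbar + (γ - β * L ^ 2) / 2 * ‖x - xbar‖ ^ 2 - 1 / (2 * β) * ‖x - z‖ ^ 2 :=
  smoothness_three_point_strongly_convex_general F F' L γ hFgrad hFlip hFsc β hβ xbar z x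
end

section
/- Let X be a real Hilbert space, F : X → ℝ convex and Fréchet differentiable with L-Lipschitz gradient and γ_F-strongly convex (γ_F ≥ 0), and G : X → (−∞,∞] convex, proper, lower semicontinuous, and γ_G-strongly convex (γ_G ≥ 0). Let τ > 0 and ζ ∈ (0,1]. Define γ := γ_G + γ_F − τζ⁻¹L² if γ_F > 0, and γ := γ_G if γ_F = 0, in which case assume additionally that τL ≤ ζ; assume γ ≥ 0. Set J := F + G. Then for all x, z, x̄ ∈ X and every subgradient q ∈ ∂G(x): ⟨q + ∇F(z), x − x̄⟩ ≥ J(x) − J(x̄) + (γ/2)·‖x − x̄‖² − (ζ/(2τ))·‖x − z‖². -/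
/-!
For `G`, strong convexity upgrades the subgradient inequality by `γ_G/2 ‖x - x̄‖²`; restricted to
the segment `[x, x̄]`, where the subgradient and the convexity inequality keep `G` finite, this is
the usual argument for real-valued functions (compare the convexity inequality at `x + t (x̄ - x)`
with the subgradient inequality, divide by `t` and let `t → 0`).

For `F` with `γ_F > 0`, split `⟪∇F z, x - x̄⟫ = ⟪∇F x, x - x̄⟫ - ⟪∇F x - ∇F z, x - x̄⟫`: strong
convexity bounds the first term, and the Lipschitz bound with Young's inequality costs
`τζ⁻¹L²/2 ‖x - x̄‖² + ζ/(2τ) ‖x - z‖²` in the second. For `γ_F = 0`, combine convexity at `z` with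
the descent lemma `F x ≤ F z + ⟪∇F z, x - z⟫ + L/2 ‖x - z‖²` and `L/2 ≤ ζ/(2τ)`.

If `G x` or `G x̄` is infinite, the right-hand side is `⊥` (in `EReal`, `⊤ - ⊤ = ⊥`).
-/

open scoped InnerProductSpace

/-- Convexity for extended-real-valued functions. -/
def EConvexOn {Z : Type*} [AddCommGroup Z] [Module ℝ Z] (f : Z → EReal) : Prop :=
  ∀ u v : Z, ∀ a b : ℝ, 0 ≤ a → 0 ≤ b → a + b = 1 →
    f (a • u + b • v) ≤ (a : EReal) * f u + (b : EReal) * f v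

open Filter Set Topology

theorem EReal.coe_add_sub_coe_add_add_coe_le {a b : EReal} {s u v r p : ℝ}
    (hab : a + s ≤ b) (h : ∀ α β : ℝ, a = α → b = β → u + α - (v + β) + r ≤ p) :
    (u + a) - (v + b) + r ≤ (p : EReal) := by
  induction a using EReal.rec with
  | bot => simp
  | top =>
    obtain rfl : b = ⊤ := by simpa using hab
    simp
  | coe α =>
    induction b using EReal.rec with
    | bot => exact absurd hab (by simp)
    | top => simp
    | coe β => exact_mod_cast h α β rfl rfl

theorem EConvexOn.convexOn_of_eq_coe {E : Type*} [AddCommGroup E] [Module ℝ E]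
    {f : E → EReal} {g : E → ℝ} {s : Set E} (hf : EConvexOn f) (hs : Convex ℝ s)
    (hfg : ∀ w ∈ s, f w = g w) : ConvexOn ℝ s g := by
  refine ⟨hs, fun u hu v hv a b ha hb hab => ?_⟩
  have h := hf u v a b ha hb hab
  rw [hfg _ (hs hu hv ha hb hab), hfg u hu, hfg v hv] at h
  exact_mod_cast h

section

variable {X : Type*} [NormedAddCommGroup X] [InnerProductSpace ℝ X]

theorem UniformConvexOn.apply_add_smul_sub_le {s : Set X} {φ : ℝ → ℝ} {f : X → ℝ} {x y : X}
    {t : ℝ} (hf : UniformConvexOn s φ f) (hx : x ∈ s) (hy : y ∈ s) (ht : t ∈ Icc (0 : ℝ) 1) :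
    f (x + t • (y - x)) ≤ f x + t * (f y - f x) - t * (1 - t) * φ ‖x - y‖ := by
  have h := hf.2 hx hy (sub_nonneg.2 ht.2) ht.1 (sub_add_cancel 1 t)
  rw [show (1 - t) • x + t • y = x + t • (y - x) by module, smul_eq_mul, smul_eq_mul] at h
  linarith

theorem UniformConvexOn.add_inner_add_le_of_subgradient {s : Set X} {φ : ℝ → ℝ} {f : X → ℝ}
    {q x y : X} (hf : UniformConvexOn s φ f) (hx : x ∈ s) (hy : y ∈ s)
    (hq : ∀ w ∈ s, f x + ⟪q, w - x⟫_ℝ ≤ f w) :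
    f x + ⟪q, y - x⟫_ℝ + φ ‖x - y‖ ≤ f y := by
  have hseg : ∀ t ∈ Ioo (0 : ℝ) 1, ⟪q, y - x⟫_ℝ + (1 - t) * φ ‖x - y‖ ≤ f y - f x := by
    intro t ht
    have hmem : x + t • (y - x) ∈ s := by
      simpa [AffineMap.lineMap_apply_module', add_comm] using
        hf.1.lineMap_mem hx hy ⟨ht.1.le, ht.2.le⟩
    have hsub := hq _ hmem
    rw [add_sub_cancel_left, real_inner_smul_right] at hsub
    have hconv := hf.apply_add_smul_sub_le hx hy (Ioo_subset_Icc_self ht)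
    refine le_of_mul_le_mul_left ?_ ht.1
    linarith
  have hlim : Tendsto (fun t : ℝ => ⟪q, y - x⟫_ℝ + (1 - t) * φ ‖x - y‖) (𝓝[>] 0)
      (𝓝 (⟪q, y - x⟫_ℝ + φ ‖x - y‖)) := by
    exact tendsto_nhdsWithin_of_tendsto_nhds <|
      (((continuous_const.sub continuous_id).mul continuous_const).const_add _).tendsto' 0 _
        (by simp)
  linarith [le_of_tendsto hlim (eventually_of_mem (Ioo_mem_nhdsGT one_pos) hseg)]

theorem add_inner_add_sq_le_of_subgradient {G : X → EReal} {γ : ℝ} {q x y : X}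
    (hsc : EConvexOn (fun w => G w - ((γ / 2 * ‖w‖ ^ 2 : ℝ) : EReal)))
    (hq : ∀ w, G x + ((⟪q, w - x⟫_ℝ : ℝ) : EReal) ≤ G w) {gx gy : ℝ}
    (hx : G x = gx) (hy : G y = gy) :
    gx + ⟪q, y - x⟫_ℝ + γ / 2 * ‖x - y‖ ^ 2 ≤ gy := by
  have hfin : ∀ w ∈ segment ℝ x y, G w = (G w).toReal := by
    rintro _ ⟨a, b, ha, hb, hab, rfl⟩
    have hsub_ne_top : G (a • x + b • y) - ((γ / 2 * ‖a • x + b • y‖ ^ 2 : ℝ) : EReal) ≠ ⊤ := by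
      refine ne_top_of_le_ne_top ?_ (hsc x y a b ha hb hab)
      simp only [hx, hy]
      norm_cast
      exact EReal.coe_ne_top _
    have hne_top : G (a • x + b • y) ≠ ⊤ := fun h => hsub_ne_top (by rw [h, EReal.top_sub_coe])
    have hne_bot : G (a • x + b • y) ≠ ⊥ :=
      ne_bot_of_le_ne_bot (by rw [hx]; exact_mod_cast EReal.coe_ne_bot _) (hq _)
    exact (EReal.coe_toReal hne_top hne_bot).symm
  have hsc' : StrongConvexOn (segment ℝ x y) γ fun w => (G w).toReal :=
    strongConvexOn_iff_convex.2 <| hsc.convexOn_of_eq_coe (convex_segment x y) fun w hw => by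
      rw [EReal.coe_sub, ← hfin w hw]
  have key := hsc'.add_inner_add_le_of_subgradient (left_mem_segment ℝ x y)
    (right_mem_segment ℝ x y) fun w hw => by
      have h := hq w
      rw [hfin w hw, hfin x (left_mem_segment ℝ x y)] at h
      exact_mod_cast h
  simpa [hx, hy] using key

variable [CompleteSpace X]

theorem HasGradientAt.hasDerivAt_comp_add_smul {f : X → ℝ} {g a v : X} {t : ℝ}
    (h : HasGradientAt f g (a + t • v)) :
    HasDerivAt (fun s : ℝ => f (a + s • v)) ⟪g, v⟫_ℝ t := by
  have hline : HasDerivAt (fun s : ℝ => a + s • v) v t := by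
    simpa using ((hasDerivAt_id t).smul_const v).const_add a
  exact (h.hasFDerivAt.comp_hasDerivAt t hline).congr_deriv (by simp)

theorem UniformConvexOn.add_inner_add_le_of_hasGradientAt {φ : ℝ → ℝ} {f : X → ℝ} {g x : X}
    (hf : UniformConvexOn univ φ f) (hg : HasGradientAt f g x) (y : X) :
    f x + ⟪g, y - x⟫_ℝ + φ ‖x - y‖ ≤ f y := by
  set ψ : ℝ → ℝ := fun t => f (x + t • (y - x))
  have hψ : HasDerivAt ψ ⟪g, y - x⟫_ℝ 0 :=
    HasGradientAt.hasDerivAt_comp_add_smul (by simpa using hg)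
  have hseg : ∀ t ∈ Ioo (0 : ℝ) 1, slope ψ 0 t + (1 - t) * φ ‖x - y‖ ≤ f y - f x := by
    intro t ht
    have hconv := hf.apply_add_smul_sub_le (mem_univ x) (mem_univ y) (Ioo_subset_Icc_self ht)
    rw [slope_def_field, sub_zero, div_add' _ _ _ ht.1.ne', div_le_iff₀ ht.1]
    simp only [ψ, zero_smul, add_zero]
    linarith
  have hslope : Tendsto (slope ψ 0) (𝓝[>] 0) (𝓝 ⟪g, y - x⟫_ℝ) :=
    (hasDerivAt_iff_tendsto_slope.mp hψ).mono_left (nhdsWithin_mono _ fun _ ht => ne_of_gt ht)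
  have hlim : Tendsto (fun t : ℝ => slope ψ 0 t + (1 - t) * φ ‖x - y‖) (𝓝[>] 0)
      (𝓝 (⟪g, y - x⟫_ℝ + φ ‖x - y‖)) := by
    exact hslope.add <| tendsto_nhdsWithin_of_tendsto_nhds <|
      ((continuous_const.sub continuous_id).mul continuous_const).tendsto' 0 _ (by simp)
  linarith [le_of_tendsto hlim (eventually_of_mem (Ioo_mem_nhdsGT one_pos) hseg)]

theorem le_add_inner_add_sq_of_lipschitz_gradient {f : X → ℝ} {f' : X → X} {L : ℝ}
    (hf : ∀ w, HasGradientAt f (f' w) w) (hL : ∀ w w', ‖f' w - f' w'‖ ≤ L * ‖w - w'‖)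
    (a b : X) : f b ≤ f a + ⟪f' a, b - a⟫_ℝ + L / 2 * ‖b - a‖ ^ 2 := by
  set v := b - a
  set ψ : ℝ → ℝ := fun t => L / 2 * ‖v‖ ^ 2 * t ^ 2 + t * ⟪f' a, v⟫_ℝ - f (a + t • v)
  have hψ : ∀ t, HasDerivAt ψ (L * ‖v‖ ^ 2 * t + ⟪f' a, v⟫_ℝ - ⟪f' (a + t • v), v⟫_ℝ) t := by
    intro t
    have h1 := ((hasDerivAt_pow 2 t).const_mul (L / 2 * ‖v‖ ^ 2)).add
      ((hasDerivAt_id t).mul_const ⟪f' a, v⟫_ℝ)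
    refine (h1.sub (hf (a + t • v)).hasDerivAt_comp_add_smul).congr_deriv ?_
    simp only [Nat.cast_ofNat, Nat.add_one_sub_one, pow_one]
    ring
  have hmono : MonotoneOn ψ (Ici 0) := by
    refine monotoneOn_of_hasDerivWithinAt_nonneg (convex_Ici 0)
      (fun t _ => (hψ t).continuousAt.continuousWithinAt) (fun t _ => (hψ t).hasDerivWithinAt) ?_
    intro t ht
    rw [interior_Ici] at ht
    have hlip : ⟪f' (a + t • v) - f' a, v⟫_ℝ ≤ L * t * ‖v‖ ^ 2 := calc
      _ ≤ ‖f' (a + t • v) - f' a‖ * ‖v‖ := real_inner_le_norm _ _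
      _ ≤ L * ‖t • v‖ * ‖v‖ :=
        mul_le_mul_of_nonneg_right (by simpa using hL (a + t • v) a) (norm_nonneg v)
      _ = L * t * ‖v‖ ^ 2 := by rw [norm_smul, Real.norm_of_nonneg ht.le]; ring
    rw [inner_sub_left] at hlip
    linarith
  have hψ0 : ψ 0 = -f a := by simp [ψ]
  have hψ1 : ψ 1 = L / 2 * ‖v‖ ^ 2 + ⟪f' a, v⟫_ℝ - f b := by simp [ψ, v]
  have h01 := hmono (mem_Ici.2 le_rfl) (mem_Ici.2 zero_le_one) zero_le_one
  rw [hψ0, hψ1] at h01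
  linarith

theorem le_inner_gradient_of_strongConvexOn {F : X → ℝ} {F' : X → X} {L m τ ζ : ℝ}
    {x z : X} (hτ : 0 < τ) (hζ : 0 < ζ) (hsc : StrongConvexOn univ m F)
    (hgrad : HasGradientAt F (F' x) x) (hlip : ‖F' x - F' z‖ ≤ L * ‖x - z‖) (y : X) :
    F x - F y + (m - τ * ζ⁻¹ * L ^ 2) / 2 * ‖x - y‖ ^ 2 - ζ / (2 * τ) * ‖x - z‖ ^ 2
      ≤ ⟪F' z, x - y⟫_ℝ := by
  have hfirst := hsc.add_inner_add_le_of_hasGradientAt hgrad y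
  have hcs : ⟪F' x - F' z, x - y⟫_ℝ ≤ L * ‖x - z‖ * ‖x - y‖ :=
    (real_inner_le_norm _ _).trans (mul_le_mul_of_nonneg_right hlip (norm_nonneg _))
  have hyoung : L * ‖x - z‖ * ‖x - y‖
      ≤ τ * ζ⁻¹ * L ^ 2 / 2 * ‖x - y‖ ^ 2 + ζ / (2 * τ) * ‖x - z‖ ^ 2 := by
    have hsq : 0 ≤ (τ * L * ‖x - y‖ - ζ * ‖x - z‖) ^ 2 / (2 * τ * ζ) := by positivity
    have hid : τ * ζ⁻¹ * L ^ 2 / 2 * ‖x - y‖ ^ 2 + ζ / (2 * τ) * ‖x - z‖ ^ 2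
        - L * ‖x - z‖ * ‖x - y‖ = (τ * L * ‖x - y‖ - ζ * ‖x - z‖) ^ 2 / (2 * τ * ζ) := by
      field_simp
      ring
    linarith
  have hsplit : ⟪F' z, x - y⟫_ℝ = -⟪F' x, y - x⟫_ℝ - ⟪F' x - F' z, x - y⟫_ℝ := by
    rw [inner_sub_left, ← neg_sub x y, inner_neg_right]
    ring
  linarith

theorem le_inner_gradient_of_convexOn {F : X → ℝ} {F' : X → X} {L τ ζ : ℝ}
    (hτ : 0 < τ) (hconv : ConvexOn ℝ univ F) (hgrad : ∀ w, HasGradientAt F (F' w) w)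
    (hlip : ∀ w w', ‖F' w - F' w'‖ ≤ L * ‖w - w'‖) (hτL : τ * L ≤ ζ) (x z y : X) :
    F x - F y - ζ / (2 * τ) * ‖x - z‖ ^ 2 ≤ ⟪F' z, x - y⟫_ℝ := by
  have hfirst := (strongConvexOn_zero.2 hconv).add_inner_add_le_of_hasGradientAt (hgrad z) y
  have hdescent := le_add_inner_add_sq_of_lipschitz_gradient hgrad hlip z x
  have hstep : L / 2 * ‖x - z‖ ^ 2 ≤ ζ / (2 * τ) * ‖x - z‖ ^ 2 := by
    refine mul_le_mul_of_nonneg_right ?_ (sq_nonneg _)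
    rw [le_div_iff₀ (by positivity)]
    linarith
  have hsplit : ⟪F' z, x - y⟫_ℝ = ⟪F' z, x - z⟫_ℝ - ⟪F' z, y - z⟫_ℝ := by
    rw [← inner_sub_right, sub_sub_sub_cancel_right]
  simp only [zero_div, zero_mul, add_zero] at hfirst
  linarith

end

theorem fb_three_point_estimate_general
    {X : Type*} [NormedAddCommGroup X] [InnerProductSpace ℝ X] [CompleteSpace X]
    (F : X → ℝ) (F' : X → X) (G : X → EReal)
    (L γF γG τ ζ : ℝ)
    (hγF : 0 ≤ γF)
    (hτ : 0 < τ) (hζ : 0 < ζ ∧ ζ ≤ 1)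
    (hFconv : ConvexOn ℝ Set.univ F)
    (hFgrad : ∀ w : X, HasGradientAt F (F' w) w)
    (hFlip : ∀ w w' : X, ‖F' w - F' w'‖ ≤ L * ‖w - w'‖)
    (hFsc : ConvexOn ℝ Set.univ (fun w => F w - γF / 2 * ‖w‖ ^ 2))
    (hGsc : EConvexOn (fun w => G w - ((γG / 2 * ‖w‖ ^ 2 : ℝ) : EReal)))
    (γ : ℝ)
    (hγdef : γ = if 0 < γF then γG + γF - τ * ζ⁻¹ * L ^ 2 else γG)
    (hγcase : γF = 0 → τ * L ≤ ζ)
    (x z xbar : X) (q : X)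
    (hq : ∀ w : X, G x + ((⟪q, w - x⟫_ℝ : ℝ) : EReal) ≤ G w) :
    ((⟪q + F' z, x - xbar⟫_ℝ : ℝ) : EReal) ≥
      (((F x : ℝ) : EReal) + G x) - (((F xbar : ℝ) : EReal) + G xbar)
        + ((γ / 2 * ‖x - xbar‖ ^ 2 - ζ / (2 * τ) * ‖x - z‖ ^ 2 : ℝ) : EReal) := by
  refine EReal.coe_add_sub_coe_add_add_coe_le (hq xbar) fun gx gbar hgx hgbar => ?_
  have hG := add_inner_add_sq_le_of_subgradient hGsc hq hgx hgbar
  have hF : F x - F xbar + (γ - γG) / 2 * ‖x - xbar‖ ^ 2 - ζ / (2 * τ) * ‖x - z‖ ^ 2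
      ≤ ⟪F' z, x - xbar⟫_ℝ := by
    split_ifs at hγdef with hγF_pos
    · have h := le_inner_gradient_of_strongConvexOn hτ hζ.1
        (strongConvexOn_iff_convex.2 hFsc) (hFgrad x) (hFlip x z) xbar
      rw [hγdef]
      linarith
    · have h := le_inner_gradient_of_convexOn hτ hFconv hFgrad hFlip
        (hγcase (le_antisymm (not_lt.1 hγF_pos) hγF)) x z xbar
      rwa [hγdef, sub_self, zero_div, zero_mul, add_zero]
  have hq_swap : ⟪q, x - xbar⟫_ℝ = -⟪q, xbar - x⟫_ℝ := by rw [← inner_neg_right, neg_sub]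
  rw [inner_add_left]
  linarith

/-- **Forward–backward three-point estimate** (Lemma 2.4): for `F` smooth
(`L`-Lipschitz gradient, `γ_F`-strongly convex) and `G` convex, proper,
lower semicontinuous and `γ_G`-strongly convex, with `γ` defined case-wise,
`⟨q + ∇F(z), x − x̄⟩ ≥ J(x) − J(x̄) + (γ/2)‖x − x̄‖² − (ζ/(2τ))‖x − z‖²`
for every `q ∈ ∂G(x)`, where `J := F + G`. -/
theorem fb_three_point_estimate
    {X : Type*} [NormedAddCommGroup X] [InnerProductSpace ℝ X] [CompleteSpace X]
    (F : X → ℝ) (F' : X → X) (G : X → EReal)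
    (L γF γG τ ζ : ℝ)
    (hL : 0 ≤ L) (hγF : 0 ≤ γF) (hγG : 0 ≤ γG)
    (hτ : 0 < τ) (hζ : 0 < ζ ∧ ζ ≤ 1)
    (hFconv : ConvexOn ℝ Set.univ F)
    (hFgrad : ∀ w : X, HasGradientAt F (F' w) w)
    (hFlip : ∀ w w' : X, ‖F' w - F' w'‖ ≤ L * ‖w - w'‖)
    (hFsc : ConvexOn ℝ Set.univ (fun w => F w - γF / 2 * ‖w‖ ^ 2))
    (hGconv : EConvexOn G)
    (hGproper : (∀ w, G w ≠ ⊥) ∧ ∃ w, G w ≠ ⊤)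
    (hGlsc : LowerSemicontinuous G)
    (hGsc : EConvexOn (fun w => G w - ((γG / 2 * ‖w‖ ^ 2 : ℝ) : EReal)))
    (γ : ℝ)
    (hγdef : γ = if 0 < γF then γG + γF - τ * ζ⁻¹ * L ^ 2 else γG)
    (hγcase : γF = 0 → τ * L ≤ ζ)
    (hγ : 0 ≤ γ)
    (x z xbar : X) (q : X)
    (hq : ∀ w : X, G x + ((⟪q, w - x⟫_ℝ : ℝ) : EReal) ≤ G w) :
    ((⟪q + F' z, x - xbar⟫_ℝ : ℝ) : EReal) ≥
      (((F x : ℝ) : EReal) + G x) - (((F xbar : ℝ) : EReal) + G xbar)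
        + ((γ / 2 * ‖x - xbar‖ ^ 2 - ζ / (2 * τ) * ‖x - z‖ ^ 2 : ℝ) : EReal) :=
  fb_three_point_estimate_general F F' G L γF γG τ ζ hγF hτ hζ hFconv hFgrad hFlip hFsc hGsc γ hγdef
    hγcase x z xbar q hq
end

section
/- Predictive online forward–backward splitting regret estimate. For each k ∈ ℕ let X_k be a real Hilbert space, F_k : X_k → ℝ convex, Fréchet differentiable with L_k-Lipschitz gradient and γ_{F_k}-strongly convex (γ_{F_k} ≥ 0), and G_k : X_k → (−∞,∞] convex, proper, lower semicontinuous and γ_{G_k}-strongly convex (γ_{G_k} ≥ 0); set J_k := F_k + G_k. Let τ_k > 0 and ζ_k ∈ (0,1] and define γ_k := γ_{G_k} + γ_{F_k} − τ_k ζ_k⁻¹ L_k² if γ_{F_k} > 0, and γ_k := γ_{G_k} if γ_{F_k} = 0, in which case assume additionally τ_k L_k ≤ ζ_k; assume γ_k ≥ 0 for all k. Let A_k : X_k → X_{k+1} be predictors and 𝓑 ⊂ ∏_{k≥0} X_k a bounded comparison set such that, with x^0 ∈ X_0 given and the iterates defined by z^{k+1} := A_k(x^k) and x^{k+1} := prox_{τ_{k+1}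 G_{k+1}}(z^{k+1} − τ_{k+1} ∇F_{k+1}(z^{k+1})), the prediction bound (1/2)‖A_k(x^k) − x̄^{k+1}‖² ≤ (Λ_k/2)‖x^k − x̄^k‖² + ε_{k+1} holds for some Λ_k > 0 and ε_{k+1} ∈ ℝ, for every x̄^{0:∞} ∈ 𝓑 and every k ∈ ℕ. Suppose nonnegative testing parameters {φ_k} satisfy φ_{k+1} ≤ φ_k(1 + γ_k τ_k) Λ_k⁻¹ for k = 0,…,N−1. Then sup over x̄^{1:N} ∈ 𝓑_{1:N} of Σ_{k=1}^{N} φ_k τ_k [J_k(x^k) − J_k(x̄^k)], plus Σ_{k=0}^{N−1} (φ_{k+1}(1 − ζ_{k+1})/2)·‖x^{k+1} − A_k(x^k)‖², is at most sup over x̄^0 ∈ 𝓑_0 of (φ_0(1 + γ_0 τ_0)/2)·‖x^0 − x̄^0‖², plus Σ_{k=1}^{N} ε_k φ_k. -/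
/-
The prox step makes `x^{k+1}` the minimiser of `τ G + ½‖· - v‖²`, `v = z^{k+1} - τ ∇F(z^{k+1})`,
which is `(1 + τγ_G)`-strongly convex; hence it undercuts every comparison point `q` by
`(1 + τγ_G)/2 ‖x^{k+1} - q‖²`. The gradient step is controlled by strong convexity of `F` and
Young's inequality with weight `ζ/τ` when `γ_F > 0`, and by the descent lemma when `γ_F = 0`.
Together:
  `τ (J(x⁺) - J(q)) ≤ ½‖z - q‖² - (1 + γτ)/2 ‖x⁺ - q‖² - (1 - ζ)/2 ‖x⁺ - z‖²`.
Weighted by `φ_{k+1}`, the prediction bound and the condition on `φ` make the right-hand sides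
telescope. A comparison sequence with `J_k(x̄^k) = ∞` and `φ_k > 0` makes its regret sum `⊥`.
-/

open scoped InnerProductSpace

/-- `p = prox_{τG}(v)`, i.e. `p` minimises `w ↦ τ G(w) + ½‖w − v‖²`. -/
def IsProx {Z : Type*} [NormedAddCommGroup Z] [InnerProductSpace ℝ Z]
    (G : Z → EReal) (τ : ℝ) (v p : Z) : Prop :=
  ∀ w : Z, (τ : EReal) * G p + ((1 / 2 * ‖p - v‖ ^ 2 : ℝ) : EReal) ≤
    (τ : EReal) * G w + ((1 / 2 * ‖w - v‖ ^ 2 : ℝ) : EReal)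

section Prox

open Set Filter Topology

lemma StrongConvexOn.add_sq_le_of_isMinOn {E : Type*} [NormedAddCommGroup E] [NormedSpace ℝ E]
    {s : Set E} {m : ℝ} {f : E → ℝ} {p q : E} (hf : StrongConvexOn s m f)
    (hmin : IsMinOn f s p) (hp : p ∈ s) (hq : q ∈ s) :
    f p + m / 2 * ‖p - q‖ ^ 2 ≤ f q := by
  have hseg : ∀ t ∈ Ioo (0 : ℝ) 1, f p + (1 - t) * (m / 2 * ‖p - q‖ ^ 2) ≤ f q := by
    intro t ⟨ht0, ht1⟩
    have hconv := hf.2 hq hp ht0.le (sub_nonneg.2 ht1.le) (add_sub_cancel t 1)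
    have hmin' := hmin (hf.1 hq hp ht0.le (sub_nonneg.2 ht1.le) (add_sub_cancel t 1))
    rw [norm_sub_rev] at hconv
    simp only [smul_eq_mul, mem_ofPred_eq] at hconv hmin'
    have hscaled : t * (f p + (1 - t) * (m / 2 * ‖p - q‖ ^ 2)) ≤ t * f q := by
      linear_combination hconv + hmin'
    exact le_of_mul_le_mul_left hscaled ht0
  have hlim : Tendsto (fun t : ℝ => f p + (1 - t) * (m / 2 * ‖p - q‖ ^ 2)) (𝓝[>] 0)
      (𝓝 (f p + m / 2 * ‖p - q‖ ^ 2)) := by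
    have hcont : Continuous fun t : ℝ => f p + (1 - t) * (m / 2 * ‖p - q‖ ^ 2) := by fun_prop
    simpa using (hcont.tendsto 0).mono_left nhdsWithin_le_nhds
  exact le_of_tendsto hlim (eventually_of_mem (Ioo_mem_nhdsGT zero_lt_one) hseg)

lemma EConvexOn.convexOn_toReal {Z : Type*} [AddCommGroup Z] [Module ℝ Z] {f : Z → EReal}
    (hf : EConvexOn f) (hbot : ∀ w, f w ≠ ⊥) :
    ConvexOn ℝ {w | f w ≠ ⊤} fun w => (f w).toReal := by
  have hle : ∀ u ∈ {w | f w ≠ ⊤}, ∀ v ∈ {w | f w ≠ ⊤}, ∀ a b : ℝ, 0 ≤ a → 0 ≤ b → a + b = 1 →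
      f (a • u + b • v) ≤ ((a * (f u).toReal + b * (f v).toReal : ℝ) : EReal) := by
    intro u hu v hv a b ha hb hab
    have h := hf u v a b ha hb hab
    rwa [← EReal.coe_toReal hu (hbot u), ← EReal.coe_toReal hv (hbot v)] at h
  refine ⟨fun u hu v hv a b ha hb hab => ?_, fun u hu v hv a b ha hb hab => ?_⟩
  · exact ne_top_of_le_ne_top (EReal.coe_ne_top _) (hle u hu v hv a b ha hb hab)
  · exact (EReal.toReal_le_toReal (hle u hu v hv a b ha hb hab) (hbot _)
      (EReal.coe_ne_top _)).trans_eq (EReal.toReal_coe _)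

lemma EConvexOn.convexOn_toReal_sub {Z : Type*} [AddCommGroup Z] [Module ℝ Z] {f : Z → EReal}
    {h : Z → ℝ} (hf : EConvexOn fun w => f w - h w) (hbot : ∀ w, f w ≠ ⊥) :
    ConvexOn ℝ {w | f w ≠ ⊤} fun w => (f w).toReal - h w := by
  set dom := {w | f w ≠ ⊤}
  have hfin : ∀ w ∈ dom, f w - h w = (((f w).toReal - h w : ℝ) : EReal) := fun w hw => by
    obtain ⟨r, hr⟩ : ∃ r : ℝ, f w = r := ⟨_, (EReal.coe_toReal hw (hbot w)).symm⟩
    rw [hr, EReal.toReal_coe, EReal.coe_sub]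
  have htop : ∀ w ∉ dom, f w - h w = ⊤ := fun w hw => by
    rw [not_not.1 hw, EReal.top_sub_coe]
  have hdom : {w | f w - h w ≠ ⊤} = dom := by
    ext w
    by_cases hw : w ∈ dom
    · exact iff_of_true (ne_of_eq_of_ne (hfin w hw) (EReal.coe_ne_top _)) hw
    · exact iff_of_false (not_not.2 (htop w hw)) hw
  refine hdom ▸ (hf.convexOn_toReal fun w => ?_).congr fun w hw => ?_
  · by_cases hw : w ∈ dom
    · exact ne_of_eq_of_ne (hfin w hw) (EReal.coe_ne_bot _)
    · exact ne_of_eq_of_ne (htop w hw) top_ne_bot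
  · rw [hdom] at hw
    exact (congrArg EReal.toReal (hfin w hw)).trans (EReal.toReal_coe _)

variable {E : Type*} [NormedAddCommGroup E] [InnerProductSpace ℝ E]

lemma IsProx.ne_top {G : E → EReal} {τ : ℝ} {v p w : E} (hp : IsProx G τ v p) (hτ : 0 < τ)
    (hbot : ∀ w, G w ≠ ⊥) (hw : G w ≠ ⊤) : G p ≠ ⊤ := by
  intro htop
  have h := hp w
  rw [htop, EReal.mul_top_of_pos (EReal.coe_pos.2 hτ), EReal.top_add_coe,
    ← EReal.coe_toReal hw (hbot w), top_le_iff] at h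
  exact EReal.coe_ne_top _ (by exact_mod_cast h)

lemma IsProx.add_sq_le {G : E → EReal} {τ γ : ℝ} {v p q : E} (hp : IsProx G τ v p)
    (hτ : 0 < τ) (hbot : ∀ w, G w ≠ ⊥)
    (hG : EConvexOn fun w => G w - ((γ / 2 * ‖w‖ ^ 2 : ℝ) : EReal)) (hq : G q ≠ ⊤) :
    τ * (G p).toReal + 1 / 2 * ‖p - v‖ ^ 2 + (1 + τ * γ) / 2 * ‖p - q‖ ^ 2 ≤
      τ * (G q).toReal + 1 / 2 * ‖q - v‖ ^ 2 := by
  have hGconv := hG.convexOn_toReal_sub hbot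
  have hsc : StrongConvexOn {w | G w ≠ ⊤} (1 + τ * γ)
      fun w => τ * (G w).toReal + 1 / 2 * ‖w - v‖ ^ 2 := by
    refine strongConvexOn_iff_convex.2 <| ((hGconv.smul hτ.le).add
      (((-innerₛₗ ℝ v).convexOn hGconv.1).add_const (1 / 2 * ‖v‖ ^ 2))).congr fun w _ => ?_
    simp only [smul_eq_mul, LinearMap.coe_neg, coe_innerₛₗ_apply, Pi.add_apply, Pi.neg_apply,
      norm_sub_sq_real, real_inner_comm]
    ring
  have hmin : IsMinOn (fun w => τ * (G w).toReal + 1 / 2 * ‖w - v‖ ^ 2) {w | G w ≠ ⊤} p := by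
    intro w hw
    have h := hp w
    rw [← EReal.coe_toReal (hp.ne_top hτ hbot hw) (hbot p), ← EReal.coe_toReal hw (hbot w)] at h
    exact_mod_cast h
  exact hsc.add_sq_le_of_isMinOn hmin (hp.ne_top hτ hbot hq) hq

lemma IsProx.coe_mul_sub_le {G : E → EReal} {f : E → ℝ} {τ c r : ℝ} {v p q : E}
    (hp : IsProx G τ v p) (hτ : 0 < τ) (hc : 0 ≤ c) (hbot : ∀ w, G w ≠ ⊥)
    (hle : G q ≠ ⊤ → τ * (f p + (G p).toReal - (f q + (G q).toReal)) ≤ r) :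
    ((c * τ : ℝ) : EReal) * ((((f p : ℝ) : EReal) + G p) - (((f q : ℝ) : EReal) + G q)) ≤
      ((c * r : ℝ) : EReal) := by
  rcases hc.eq_or_lt with rfl | hc
  · simp
  by_cases hq : G q = ⊤
  · rw [hq, EReal.coe_add_top, EReal.sub_top, EReal.coe_mul_bot_of_pos (mul_pos hc hτ)]
    exact bot_le
  rw [← EReal.coe_toReal (hp.ne_top hτ hbot hq) (hbot p), ← EReal.coe_toReal hq (hbot q)]
  norm_cast
  linarith [mul_le_mul_of_nonneg_left (hle hq) hc.le]

end Prox

section Smooth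

open Set

variable {E : Type*} [NormedAddCommGroup E] [InnerProductSpace ℝ E] [CompleteSpace E]
  {f : E → ℝ} {g x : E}

lemma HasGradientAt.hasDerivAt_comp_lineMap {y : E} {t : ℝ}
    (hf : HasGradientAt f g (AffineMap.lineMap x y t)) :
    HasDerivAt (fun s : ℝ => f (AffineMap.lineMap x y s)) ⟪g, y - x⟫_ℝ t :=
  hf.hasFDerivAt.comp_hasDerivAt t AffineMap.hasDerivAt_lineMap

lemma ConvexOn.add_inner_le_of_hasGradientAt (hf : ConvexOn ℝ univ f)
    (hg : HasGradientAt f g x) (y : E) : f x + ⟪g, y - x⟫_ℝ ≤ f y := by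
  have hline := (hf.comp_affineMap (AffineMap.lineMap x y)).le_slope_of_hasDerivAt
    (mem_univ 0) (mem_univ 1) zero_lt_one
    (HasGradientAt.hasDerivAt_comp_lineMap (by simpa using hg))
  simp only [slope_def_field, Function.comp_apply, AffineMap.lineMap_apply_one,
    AffineMap.lineMap_apply_zero, sub_zero, div_one] at hline
  linarith

lemma hasGradientAt_norm_sq (x : E) : HasGradientAt (fun w => ‖w‖ ^ 2) ((2 : ℝ) • x) x := by
  refine (hasStrictFDerivAt_norm_sq x).hasFDerivAt.congr_fderiv ?_
  ext y
  simp

lemma ConvexOn.add_inner_add_sq_le_of_hasGradientAt {m : ℝ}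
    (hf : ConvexOn ℝ univ fun w => f w - m / 2 * ‖w‖ ^ 2)
    (hg : HasGradientAt f g x) (y : E) :
    f x + ⟪g, y - x⟫_ℝ + m / 2 * ‖y - x‖ ^ 2 ≤ f y := by
  have hgrad : HasGradientAt (fun w => f w - m / 2 * ‖w‖ ^ 2) (g - m • x) x := by
    refine (hg.hasFDerivAt.sub
      ((hasGradientAt_norm_sq x).hasFDerivAt.const_mul (m / 2))).congr_fderiv ?_
    ext w
    simp only [map_smul, sub_apply, InnerProductSpace.toDual_apply_apply,
      smul_apply, smul_eq_mul, map_sub, sub_right_inj]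
    ring
  have key := hf.add_inner_le_of_hasGradientAt hgrad y
  have hxyx : ⟪x, y - x⟫_ℝ = ⟪x, y⟫_ℝ - ‖x‖ ^ 2 := by
    rw [inner_sub_right, real_inner_self_eq_norm_sq]
  rw [inner_sub_left, real_inner_smul_left, hxyx] at key
  rw [norm_sub_sq_real, real_inner_comm x y]
  linarith

variable {F' : E → E} {L : ℝ}

lemma le_add_inner_add_sq_of_hasGradientAt_of_lipschitz
    (hf : ∀ w, HasGradientAt f (F' w) w) (hL : ∀ w w', ‖F' w - F' w'‖ ≤ L * ‖w - w'‖)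
    (x y : E) : f y ≤ f x + ⟪F' x, y - x⟫_ℝ + L / 2 * ‖y - x‖ ^ 2 := by
  set d := y - x
  let ψ : ℝ → ℝ := fun t => f (AffineMap.lineMap x y t) - t * ⟪F' x, d⟫_ℝ - L / 2 * ‖d‖ ^ 2 * t ^ 2
  have hψ : ∀ t, HasDerivAt ψ (⟪F' (AffineMap.lineMap x y t) - F' x, d⟫_ℝ - L * ‖d‖ ^ 2 * t) t := by
    intro t
    refine ((((hf _).hasDerivAt_comp_lineMap).sub ((hasDerivAt_id t).mul_const _)).sub
      ((hasDerivAt_pow 2 t).const_mul (L / 2 * ‖d‖ ^ 2))).congr_deriv ?_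
    simp only [inner_sub_left, one_mul, Nat.cast_ofNat, Nat.add_one_sub_one, pow_one]
    ring
  have hanti : AntitoneOn ψ (Icc 0 1) := by
    refine antitoneOn_of_hasDerivWithinAt_nonpos (convex_Icc 0 1)
      (HasDerivAt.continuousOn fun t _ => hψ t) (fun t _ => (hψ t).hasDerivWithinAt) ?_
    intro t ht
    rw [interior_Icc] at ht
    have hdist : ‖AffineMap.lineMap x y t - x‖ = t * ‖d‖ := by
      rw [← vsub_eq_sub, AffineMap.lineMap_vsub_left, norm_smul, Real.norm_of_nonneg ht.1.le]; rfl
    have := (real_inner_le_norm _ _).trans (mul_le_mul_of_nonneg_right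
      (hL (AffineMap.lineMap x y t) x) (norm_nonneg d))
    rw [hdist] at this
    linarith
  have := hanti (left_mem_Icc.2 zero_le_one) (right_mem_Icc.2 zero_le_one) zero_le_one
  simp only [ψ, AffineMap.lineMap_apply_one, AffineMap.lineMap_apply_zero, one_mul, one_pow,
    mul_one, zero_mul, sub_zero, ne_eq, OfNat.ofNat_ne_zero, not_false_eq_true, zero_pow,
    mul_zero] at this
  linarith

lemma sub_le_inner_add_sq_of_convexOn (hFc : ConvexOn ℝ univ f) (hF : ∀ w, HasGradientAt f (F' w) w)
    (hL : ∀ w w', ‖F' w - F' w'‖ ≤ L * ‖w - w'‖) (p q z : E) :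
    f p - f q ≤ ⟪F' z, p - q⟫_ℝ + L / 2 * ‖p - z‖ ^ 2 := by
  have hdescent := le_add_inner_add_sq_of_hasGradientAt_of_lipschitz hF hL z p
  have hconv := hFc.add_inner_le_of_hasGradientAt (hF z) q
  have hinner : ⟪F' z, p - z⟫_ℝ - ⟪F' z, q - z⟫_ℝ = ⟪F' z, p - q⟫_ℝ := by
    rw [← inner_sub_right, sub_sub_sub_cancel_right]
  linarith

lemma sub_le_inner_add_sq_of_convexOn_sub_sq {m c : ℝ} (hc : 0 < c)
    (hFc : ConvexOn ℝ univ fun w => f w - m / 2 * ‖w‖ ^ 2) (hF : ∀ w, HasGradientAt f (F' w) w)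
    (hL : ∀ w w', ‖F' w - F' w'‖ ≤ L * ‖w - w'‖) (p q z : E) :
    f p - f q ≤ ⟪F' z, p - q⟫_ℝ + c / 2 * ‖p - z‖ ^ 2 + (L ^ 2 / c - m) / 2 * ‖p - q‖ ^ 2 := by
  have hsc := hFc.add_inner_add_sq_le_of_hasGradientAt (hF p) q
  have hcs : ⟪F' p - F' z, p - q⟫_ℝ ≤ L * ‖p - z‖ * ‖p - q‖ :=
    (real_inner_le_norm _ _).trans (mul_le_mul_of_nonneg_right (hL p z) (norm_nonneg _))
  have hyoung : L * ‖p - z‖ * ‖p - q‖ ≤ c / 2 * ‖p - z‖ ^ 2 + L ^ 2 / c / 2 * ‖p - q‖ ^ 2 := by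
    have hsq : c / 2 * ‖p - z‖ ^ 2 + L ^ 2 / c / 2 * ‖p - q‖ ^ 2 - L * ‖p - z‖ * ‖p - q‖ =
        (c * ‖p - z‖ - L * ‖p - q‖) ^ 2 / (2 * c) := by
      field_simp; ring
    have : 0 ≤ (c * ‖p - z‖ - L * ‖p - q‖) ^ 2 / (2 * c) := by positivity
    linarith
  rw [inner_sub_left] at hcs
  rw [← neg_sub p q, inner_neg_right, norm_neg] at hsc
  linarith

lemma IsProx.forward_backward_step {G : E → EReal} {γF γG γ τ ζ : ℝ} (hτ : 0 < τ) (hζ : 0 < ζ)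
    (hγF : 0 ≤ γF) (hF : ∀ w, HasGradientAt f (F' w) w)
    (hL : ∀ w w', ‖F' w - F' w'‖ ≤ L * ‖w - w'‖)
    (hFsc : ConvexOn ℝ univ fun w => f w - γF / 2 * ‖w‖ ^ 2) (hGbot : ∀ w, G w ≠ ⊥)
    (hGsc : EConvexOn fun w => G w - ((γG / 2 * ‖w‖ ^ 2 : ℝ) : EReal))
    (hγ : γ = if 0 < γF then γG + γF - τ * ζ⁻¹ * L ^ 2 else γG) (hγcase : γF = 0 → τ * L ≤ ζ)
    {z p q : E} (hp : IsProx G τ (z - τ • F' z) p) (hq : G q ≠ ⊤) :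
    τ * (f p + (G p).toReal - (f q + (G q).toReal)) ≤
      1 / 2 * ‖z - q‖ ^ 2 - (1 + γ * τ) / 2 * ‖p - q‖ ^ 2 - (1 - ζ) / 2 * ‖p - z‖ ^ 2 := by
  have hsmooth : τ * (f p - f q) ≤ τ * ⟪F' z, p - q⟫_ℝ + ζ / 2 * ‖p - z‖ ^ 2
      + τ * (γG - γ) / 2 * ‖p - q‖ ^ 2 := by
    by_cases hγF0 : 0 < γF
    · have h := sub_le_inner_add_sq_of_convexOn_sub_sq (div_pos hζ hτ) hFsc hF hL p q z
      refine (mul_le_mul_of_nonneg_left h hτ.le).trans_eq ?_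
      rw [hγ, if_pos hγF0]
      field_simp
      ring
    · obtain rfl : γF = 0 := le_antisymm (not_lt.1 hγF0) hγF
      rw [if_neg hγF0] at hγ
      have h := sub_le_inner_add_sq_of_convexOn (by simpa using hFsc) hF hL p q z
      have hτL := mul_le_mul_of_nonneg_right (hγcase rfl) (sq_nonneg ‖p - z‖)
      rw [hγ, sub_self, mul_zero, zero_div, zero_mul, add_zero]
      linear_combination τ * h + hτL / 2
  have hprox := hp.add_sq_le hτ hGbot hGsc hq
  have hexpand : ∀ a, ‖a - (z - τ • F' z)‖ ^ 2 = ‖a - z‖ ^ 2 + 2 * τ * ⟪F' z, a - z⟫_ℝ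
      + τ ^ 2 * ‖F' z‖ ^ 2 := fun a => by
    rw [sub_sub_eq_add_sub, add_sub_right_comm, norm_add_sq_real, inner_smul_right, norm_smul,
      mul_pow, Real.norm_eq_abs, sq_abs, real_inner_comm]
    ring
  have hinner : ⟪F' z, p - z⟫_ℝ - ⟪F' z, q - z⟫_ℝ = ⟪F' z, p - q⟫_ℝ := by
    rw [← inner_sub_right, sub_sub_sub_cancel_right]
  rw [hexpand, hexpand, norm_sub_rev q z] at hprox
  linear_combination hprox + hsmooth - τ * hinner

end Smooth

lemma mul_le_of_le_mul_inv {φ φ' κ Λ d e ε : ℝ} (hΛ : 0 < Λ) (hφ' : 0 ≤ φ') (he : 0 ≤ e)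
    (hφ : φ' ≤ φ * κ * Λ⁻¹) (hd : d ≤ Λ / 2 * e + ε) : φ' * d ≤ φ * κ / 2 * e + ε * φ' := by
  have hφΛ : φ' * Λ ≤ φ * κ := by rwa [le_mul_inv_iff₀ hΛ] at hφ
  calc φ' * d ≤ φ' * (Λ / 2 * e + ε) := mul_le_mul_of_nonneg_left hd hφ'
    _ = φ' * Λ / 2 * e + ε * φ' := by ring
    _ ≤ φ * κ / 2 * e + ε * φ' := by gcongr

section Telescoping

open Finset

lemma sum_Icc_one_eq_sum_range {M : Type*} [AddCommMonoid M] (f : ℕ → M) (N : ℕ) :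
    ∑ k ∈ Icc 1 N, f k = ∑ j ∈ range N, f (j + 1) := by
  rw [← Ico_add_one_right_eq_Icc, sum_Ico_eq_sum_range, add_tsub_cancel_right]
  simp only [add_comm]

lemma EReal.coe_finsetSum {ι : Type*} (s : Finset ι) (f : ι → ℝ) :
    ((∑ i ∈ s, f i : ℝ) : EReal) = ∑ i ∈ s, (f i : EReal) :=
  map_sum (⟨⟨Real.toEReal, EReal.coe_zero⟩, EReal.coe_add⟩ : ℝ →+ EReal) f s

lemma biSup_sum_add_le_of_telescoping {ι : Type*} {B : Set ι} {T : ι → ℕ → EReal}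
    {V : ι → ℕ → ℝ} {e w : ℕ → ℝ} {N : ℕ} (hV : ∀ b ∈ B, 0 ≤ V b N)
    (hT : ∀ b ∈ B, ∀ j < N, T b (j + 1) ≤ ((V b j - V b (j + 1) + e (j + 1) - w j : ℝ) : EReal)) :
    (⨆ b ∈ B, ∑ k ∈ Icc 1 N, T b k) + ((∑ j ∈ range N, w j : ℝ) : EReal) ≤
      (⨆ b ∈ B, ((V b 0 : ℝ) : EReal)) + ((∑ k ∈ Icc 1 N, e k : ℝ) : EReal) := by
  rw [← EReal.le_sub_iff_add_le (.inl (EReal.coe_ne_bot _)) (.inl (EReal.coe_ne_top _))]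
  refine iSup₂_le fun b hb => ?_
  have hsum : ∑ j ∈ range N, (V b j - V b (j + 1) + e (j + 1) - w j) ≤
      V b 0 + ∑ k ∈ Icc 1 N, e k - ∑ j ∈ range N, w j := by
    rw [sum_sub_distrib, sum_add_distrib, sum_range_sub', sum_Icc_one_eq_sum_range]
    linarith [hV b hb]
  calc ∑ k ∈ Icc 1 N, T b k = ∑ j ∈ range N, T b (j + 1) := sum_Icc_one_eq_sum_range _ N
    _ ≤ ∑ j ∈ range N, ((V b j - V b (j + 1) + e (j + 1) - w j : ℝ) : EReal) :=
      sum_le_sum fun j hj => hT b hb j (mem_range.1 hj)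
    _ ≤ ((V b 0 + ∑ k ∈ Icc 1 N, e k - ∑ j ∈ range N, w j : ℝ) : EReal) := by
      rw [← EReal.coe_finsetSum]; exact EReal.coe_le_coe_iff.2 hsum
    _ ≤ (⨆ b ∈ B, ((V b 0 : ℝ) : EReal)) + ((∑ k ∈ Icc 1 N, e k : ℝ) : EReal)
        - ((∑ j ∈ range N, w j : ℝ) : EReal) := by
      rw [EReal.coe_sub, EReal.coe_add]
      exact EReal.sub_le_sub (add_le_add_left (le_biSup (fun b => ((V b 0 : ℝ) : EReal)) hb) _)
        le_rfl

end Telescoping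

theorem pofb_regret_general
    {X : ℕ → Type*}
    [∀ k, NormedAddCommGroup (X k)] [∀ k, InnerProductSpace ℝ (X k)]
    [∀ k, CompleteSpace (X k)]
    (F : ∀ k, X k → ℝ) (F' : ∀ k, X k → X k) (G : ∀ k, X k → EReal)
    (L γF γG γ τ ζ Λ ε φ : ℕ → ℝ)
    (hτ : ∀ k, 0 < τ k) (hζ : ∀ k, 0 < ζ k ∧ ζ k ≤ 1)
    (hγF : ∀ k, 0 ≤ γF k)
    (hFgrad : ∀ k, 1 ≤ k → ∀ w, HasGradientAt (F k) (F' k w) w)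
    (hFlip : ∀ k, 1 ≤ k → ∀ w w', ‖F' k w - F' k w'‖ ≤ L k * ‖w - w'‖)
    (hFsc : ∀ k, 1 ≤ k → ConvexOn ℝ Set.univ (fun w => F k w - γF k / 2 * ‖w‖ ^ 2))
    (hGproper : ∀ k, 1 ≤ k → (∀ w, G k w ≠ ⊥) ∧ ∃ w, G k w ≠ ⊤)
    (hGsc : ∀ k, 1 ≤ k →
      EConvexOn (fun w => G k w - ((γG k / 2 * ‖w‖ ^ 2 : ℝ) : EReal)))
    (hγdef : ∀ k, 1 ≤ k →
      γ k = if 0 < γF k then γG k + γF k - τ k * (ζ k)⁻¹ * L k ^ 2 else γG k)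
    (hγcase : ∀ k, 1 ≤ k → γF k = 0 → τ k * L k ≤ ζ k)
    (hγpos : ∀ k, 0 ≤ γ k)
    (hΛ : ∀ k, 0 < Λ k)
    (A : ∀ k, X k → X (k + 1))
    (𝓑 : Set (∀ k, X k))
    (x : ∀ k, X k)
    (hstep : ∀ k : ℕ, IsProx (G (k + 1)) (τ (k + 1))
      (A k (x k) - τ (k + 1) • F' (k + 1) (A k (x k))) (x (k + 1)))
    (hpred : ∀ b ∈ 𝓑, ∀ k : ℕ,
      1 / 2 * ‖A k (x k) - b (k + 1)‖ ^ 2 ≤ Λ k / 2 * ‖x k - b k‖ ^ 2 + ε (k + 1))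
    (N : ℕ)
    (hφpos : ∀ k, 0 ≤ φ k)
    (hφ : ∀ k < N, φ (k + 1) ≤ φ k * (1 + γ k * τ k) * (Λ k)⁻¹) :
    (⨆ b ∈ 𝓑, ∑ k ∈ Finset.Icc 1 N,
        ((φ k * τ k : ℝ) : EReal) *
          ((((F k (x k) : ℝ) : EReal) + G k (x k)) -
            (((F k (b k) : ℝ) : EReal) + G k (b k))))
      + ((∑ k ∈ Finset.range N,
          φ (k + 1) * (1 - ζ (k + 1)) / 2 * ‖x (k + 1) - A k (x k)‖ ^ 2 : ℝ) : EReal)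
    ≤ (⨆ b ∈ 𝓑, ((φ 0 * (1 + γ 0 * τ 0) / 2 * ‖x 0 - b 0‖ ^ 2 : ℝ) : EReal))
      + ((∑ k ∈ Finset.Icc 1 N, ε k * φ k : ℝ) : EReal) := by
  refine biSup_sum_add_le_of_telescoping (B := 𝓑)
    (T := fun b k => ((φ k * τ k : ℝ) : EReal) *
      ((((F k (x k) : ℝ) : EReal) + G k (x k)) - (((F k (b k) : ℝ) : EReal) + G k (b k))))
    (V := fun b j => φ j * (1 + γ j * τ j) / 2 * ‖x j - b j‖ ^ 2) (e := fun k => ε k * φ k)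
    (w := fun j => φ (j + 1) * (1 - ζ (j + 1)) / 2 * ‖x (j + 1) - A j (x j)‖ ^ 2)
    (fun b _ => ?_) fun b hb j hj => ?_
  · have := hφpos N; have := hγpos N; have := hτ N
    positivity
  · have hk : 1 ≤ j + 1 := Nat.le_add_left 1 j
    refine ((hstep j).coe_mul_sub_le (hτ _) (hφpos _) (hGproper _ hk).1 fun hq =>
      (hstep j).forward_backward_step (hτ _) (hζ _).1 (hγF _) (hFgrad _ hk) (hFlip _ hk)
        (hFsc _ hk) (hGproper _ hk).1 (hGsc _ hk) (hγdef _ hk) (hγcase _ hk) hq).trans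
      (EReal.coe_le_coe_iff.2 ?_)
    have := mul_le_of_le_mul_inv (hΛ j) (hφpos _) (sq_nonneg _) (hφ j hj) (hpred b hb j)
    linarith

/-- **Regret estimate for predictive online forward–backward splitting**
(Theorem 2.5). -/
theorem pofb_regret
    {X : ℕ → Type*}
    [∀ k, NormedAddCommGroup (X k)] [∀ k, InnerProductSpace ℝ (X k)]
    [∀ k, CompleteSpace (X k)]
    (F : ∀ k, X k → ℝ) (F' : ∀ k, X k → X k) (G : ∀ k, X k → EReal)
    (L γF γG γ τ ζ Λ ε φ : ℕ → ℝ)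
    (hτ : ∀ k, 0 < τ k) (hζ : ∀ k, 0 < ζ k ∧ ζ k ≤ 1)
    (hγF : ∀ k, 0 ≤ γF k) (hγG : ∀ k, 0 ≤ γG k) (hL : ∀ k, 0 ≤ L k)
    (hFconv : ∀ k, 1 ≤ k → ConvexOn ℝ Set.univ (F k))
    (hFgrad : ∀ k, 1 ≤ k → ∀ w, HasGradientAt (F k) (F' k w) w)
    (hFlip : ∀ k, 1 ≤ k → ∀ w w', ‖F' k w - F' k w'‖ ≤ L k * ‖w - w'‖)
    (hFsc : ∀ k, 1 ≤ k → ConvexOn ℝ Set.univ (fun w => F k w - γF k / 2 * ‖w‖ ^ 2))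
    (hGconv : ∀ k, 1 ≤ k → EConvexOn (G k))
    (hGproper : ∀ k, 1 ≤ k → (∀ w, G k w ≠ ⊥) ∧ ∃ w, G k w ≠ ⊤)
    (hGlsc : ∀ k, 1 ≤ k → LowerSemicontinuous (G k))
    (hGsc : ∀ k, 1 ≤ k →
      EConvexOn (fun w => G k w - ((γG k / 2 * ‖w‖ ^ 2 : ℝ) : EReal)))
    (hγdef : ∀ k, 1 ≤ k →
      γ k = if 0 < γF k then γG k + γF k - τ k * (ζ k)⁻¹ * L k ^ 2 else γG k)
    (hγcase : ∀ k, 1 ≤ k → γF k = 0 → τ k * L k ≤ ζ k)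
    (hγpos : ∀ k, 0 ≤ γ k)
    (hΛ : ∀ k, 0 < Λ k)
    (A : ∀ k, X k → X (k + 1))
    (𝓑 : Set (∀ k, X k))
    (h𝓑bdd : ∀ k, Bornology.IsBounded ((fun b => b k) '' 𝓑))
    (x : ∀ k, X k)
    (hstep : ∀ k : ℕ, IsProx (G (k + 1)) (τ (k + 1))
      (A k (x k) - τ (k + 1) • F' (k + 1) (A k (x k))) (x (k + 1)))
    (hpred : ∀ b ∈ 𝓑, ∀ k : ℕ,
      1 / 2 * ‖A k (x k) - b (k + 1)‖ ^ 2 ≤ Λ k / 2 * ‖x k - b k‖ ^ 2 + ε (k + 1))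
    (N : ℕ)
    (hφpos : ∀ k, 0 ≤ φ k)
    (hφ : ∀ k < N, φ (k + 1) ≤ φ k * (1 + γ k * τ k) * (Λ k)⁻¹) :
    (⨆ b ∈ 𝓑, ∑ k ∈ Finset.Icc 1 N,
        ((φ k * τ k : ℝ) : EReal) *
          ((((F k (x k) : ℝ) : EReal) + G k (x k)) -
            (((F k (b k) : ℝ) : EReal) + G k (b k))))
      + ((∑ k ∈ Finset.range N,
          φ (k + 1) * (1 - ζ (k + 1)) / 2 * ‖x (k + 1) - A k (x k)‖ ^ 2 : ℝ) : EReal)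
    ≤ (⨆ b ∈ 𝓑, ((φ 0 * (1 + γ 0 * τ 0) / 2 * ‖x 0 - b 0‖ ^ 2 : ℝ) : EReal))
      + ((∑ k ∈ Finset.Icc 1 N, ε k * φ k : ℝ) : EReal) :=
  pofb_regret_general F F' G L γF γG γ τ ζ Λ ε φ hτ hζ hγF hFgrad hFlip hFsc hGproper hGsc hγdef
    hγcase hγpos hΛ A 𝓑 x hstep hpred N hφpos hφ
end

section
/- If B = B_X × Y for some nonempty B_X ⊂ X with inf_{x̄∈B_X} [F(x̄) + G(Kx̄)] finite, then G̃ = G, and consequently the partial primal gap reduces to a difference of function values: Ĝ_{B_X×Y}(x) = [F(x) + G(Kx)] − inf_{x̄∈B_X} [F(x̄) + G(Kx̄)] for every x ∈ X. -/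
open scoped InnerProductSpace

noncomputable section

/-- A function is proper: it never takes the value `⊥` and is somewhere finite. -/
def EProper {Z : Type*} (f : Z → EReal) : Prop :=
  (∀ z, f z ≠ ⊥) ∧ ∃ z, f z ≠ ⊤

/-- Coercivity: `f(z) → ∞` as `‖z‖ → ∞`. -/
def ECoercive {Z : Type*} [SeminormedAddCommGroup Z] (f : Z → EReal) : Prop :=
  ∀ C : ℝ, ∃ r : ℝ, ∀ z : Z, r ≤ ‖z‖ → (C : EReal) ≤ f z

open Classical in
/-- The `{0,∞}`-valued indicator function of a set. -/
def indicatorE {Z : Type*} (A : Set Z) (z : Z) : EReal :=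
  if z ∈ A then 0 else ⊤

/-- The Fenchel conjugate of an extended-real-valued function on a real
inner product space. -/
def econj {Z : Type*} [NormedAddCommGroup Z] [InnerProductSpace ℝ Z]
    (f : Z → EReal) (zs : Z) : EReal :=
  ⨆ z : Z, ((⟪z, zs⟫_ℝ : ℝ) : EReal) - f z

variable {X Y : Type*}
  [NormedAddCommGroup X] [InnerProductSpace ℝ X] [CompleteSpace X]
  [NormedAddCommGroup Y] [InnerProductSpace ℝ Y] [CompleteSpace Y]

/-- The Lagrangian `ℒ(x,y) := F(x) + ⟨Kx, y⟩ − G*(y)`. -/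
def lagr (F : X → EReal) (G : Y → EReal) (K : X →L[ℝ] Y) (x : X) (y : Y) : EReal :=
  F x + ((⟪K x, y⟫_ℝ : ℝ) : EReal) - econj G y

/-- The Lagrangian duality gap `𝒢^ℒ(x,y;x̄,ȳ) := ℒ(x,ȳ) − ℒ(x̄,y)`. -/
def lagGap (F : X → EReal) (G : Y → EReal) (K : X →L[ℝ] Y)
    (x : X) (y : Y) (xb : X) (yb : Y) : EReal :=
  lagr F G K x yb - lagr F G K xb y

/-- The partial primal gap `Ĝ_B(x) := sup_{(x̄,ȳ)∈B} inf_y 𝒢^ℒ(x,y;x̄,ȳ)`. -/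
def hatGap (F : X → EReal) (G : Y → EReal) (K : X →L[ℝ] Y)
    (B : Set (X × Y)) (x : X) : EReal :=
  ⨆ p ∈ B, ⨅ y : Y, lagGap F G K x y p.1 p.2

/-- `J_B(x̃,ỹ) := F(x̃) + G(Kx̃) + δ_B(x̃,ỹ)`. -/
def JB (F : X → EReal) (G : Y → EReal) (K : X →L[ℝ] Y)
    (B : Set (X × Y)) (p : X × Y) : EReal :=
  F p.1 + G (K p.1) + indicatorE B p

/-- The Fenchel conjugate of `J_B` on `X × Y`. -/
def JBconj (F : X → EReal) (G : Y → EReal) (K : X →L[ℝ] Y)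
    (B : Set (X × Y)) (q : X × Y) : EReal :=
  ⨆ p : X × Y, ((⟪p.1, q.1⟫_ℝ + ⟪p.2, q.2⟫_ℝ : ℝ) : EReal) - JB F G K B p

/-- `G̃(y') := sup_{x̄,ȳ} (⟨y',ȳ⟩ − G*(ȳ) − J_B(x̄,ȳ)) − J_B*(0,0)`. -/
def Gtilde (F : X → EReal) (G : Y → EReal) (K : X →L[ℝ] Y)
    (B : Set (X × Y)) (y' : Y) : EReal :=
  (⨆ xb : X, ⨆ yb : Y,
      ((⟪y', yb⟫_ℝ : ℝ) : EReal) - econj G yb - JB F G K B (xb, yb))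
    - JBconj F G K B 0

/-!
With `B = B_X × Y` the indicator in `J_B` constrains only `x̄`. Hence in `G̃(y')` the supremum over
`ȳ` is the biconjugate `G**(y')` shifted by `-(F + G ∘ K)(x̄)`, the supremum over `x̄ ∈ B_X` turns
the shift into `-inf_{B_X} (F + G ∘ K) = J_B*(0,0)`, which cancels, and `G** = G` by Fenchel–Moreau.
Likewise `sup_y ℒ(x̄, y) = F(x̄) + G(Kx̄)`, so the supremum over `ȳ` and the infimum over `y` of the
Lagrangian gap produce the two function values. The infimum being a real number is what makes these
shifts cancel in `EReal`. Fenchel–Moreau itself comes from separating a point below the graph from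
the closed convex epigraph.
-/

namespace EReal

variable {ι : Sort*}

theorem add_iSup (a : EReal) (f : ι → EReal) : a + ⨆ i, f i = ⨆ i, (a + f i) := by
  refine le_antisymm ?_ (iSup_le fun i => add_le_add_right (le_iSup f i) a)
  induction a with
  | bot => simp
  | top =>
    obtain hf | hf := eq_or_ne (⨆ i, f i) ⊥
    · simp [hf]
    obtain ⟨i, hi⟩ := lt_iSup_iff.1 (bot_lt_iff_ne_bot.2 hf)
    rw [top_add_of_ne_bot hf]
    exact le_iSup_of_le i (top_add_of_ne_bot (ne_bot_of_gt hi)).ge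
  | coe a =>
    rw [add_comm, ← le_sub_iff_add_le (.inl (coe_ne_bot a)) (.inl (coe_ne_top a))]
    exact iSup_le fun i => (le_sub_iff_add_le (.inl (coe_ne_bot a)) (.inl (coe_ne_top a))).2
      (by rw [add_comm]; exact le_iSup (fun i => (a : EReal) + f i) i)

theorem iSup_sub (f : ι → EReal) (b : EReal) : (⨆ i, f i) - b = ⨆ i, (f i - b) := by
  simp only [sub_eq_add_neg, add_comm _ (-b), add_iSup]

theorem neg_iInf (f : ι → EReal) : -(⨅ i, f i) = ⨆ i, -f i :=
  le_antisymm (EReal.neg_le.2 (le_iInf fun i => EReal.neg_le.1 (le_iSup (fun i => -f i) i)))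
    (iSup_le fun i => EReal.neg_le_neg_iff.2 (iInf_le f i))

theorem sub_iInf (a : EReal) (f : ι → EReal) : a - ⨅ i, f i = ⨆ i, (a - f i) := by
  simp only [sub_eq_add_neg, neg_iInf, add_iSup]

end EReal

theorem nonpos_of_forall_add_mul_lt {a s u t₁ : ℝ} (h : ∀ t, t₁ ≤ t → a + s * t < u) : s ≤ 0 := by
  by_contra! hs
  have := h (max t₁ ((u - a) / s)) (le_max_left _ _)
  have : (u - a) / s * s ≤ max t₁ ((u - a) / s) * s :=
    mul_le_mul_of_nonneg_right (le_max_right _ _) hs.le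
  rw [div_mul_cancel₀ _ hs.ne'] at this
  linarith

section ExtendedRealFunction

variable {Z : Type*} {f : Z → EReal}

def realEpigraph (f : Z → EReal) : Set (Z × ℝ) := {p | f p.1 ≤ p.2}

theorem isClosed_realEpigraph [TopologicalSpace Z] (hf : LowerSemicontinuous f) :
    IsClosed (realEpigraph f) :=
  hf.isClosed_epigraph.preimage
    (continuous_fst.prodMk (continuous_coe_real_ereal.comp continuous_snd))

theorem convex_realEpigraph [AddCommGroup Z] [Module ℝ Z] (hf : EConvexOn f) :
    Convex ℝ (realEpigraph f) := by
  rintro ⟨u, t₁⟩ hu ⟨v, t₂⟩ hv a b ha hb hab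
  calc f (a • u + b • v) ≤ (a : EReal) * f u + (b : EReal) * f v := hf u v a b ha hb hab
    _ ≤ (a : EReal) * t₁ + (b : EReal) * t₂ :=
        add_le_add (mul_le_mul_of_nonneg_left hu (EReal.coe_nonneg.2 ha))
          (mul_le_mul_of_nonneg_left hv (EReal.coe_nonneg.2 hb))
    _ = ((a * t₁ + b * t₂ : ℝ) : EReal) := by norm_cast

theorem EProper.exists_eq_coe (hf : EProper f) : ∃ (z : Z) (t : ℝ), f z = t :=
  let ⟨z, hz⟩ := hf.2
  ⟨z, (f z).toReal, (EReal.coe_toReal hz (hf.1 z)).symm⟩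

end ExtendedRealFunction

section FenchelMoreau

variable {Z : Type*} [NormedAddCommGroup Z] [InnerProductSpace ℝ Z] {f : Z → EReal}

theorem econj_le_coe {zs : Z} {c : ℝ} (h : ∀ z, ((⟪z, zs⟫_ℝ - c : ℝ) : EReal) ≤ f z) :
    econj f zs ≤ c :=
  iSup_le fun z => EReal.sub_le_of_le_add' <|
    (EReal.sub_le_iff_le_add (.inl (EReal.coe_ne_bot c)) (.inl (EReal.coe_ne_top c))).1
      (EReal.coe_sub _ _ ▸ h z)

theorem econj_econj_eq_iSup (f : Z → EReal) (v : Z) :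
    econj (econj f) v = ⨆ zs, ((⟪v, zs⟫_ℝ : ℝ) : EReal) - econj f zs := by
  simp only [econj, real_inner_comm v]

theorem econj_econj_le (z : Z) : econj (econj f) z ≤ f z := by
  refine iSup_le fun zs => ?_
  have hyoung : ((⟪z, zs⟫_ℝ : ℝ) : EReal) - f z ≤ econj f zs :=
    le_iSup (fun z => ((⟪z, zs⟫_ℝ : ℝ) : EReal) - f z) z
  rw [real_inner_comm]
  revert hyoung
  induction f z with
  | bot => intro h; rw [EReal.coe_sub_bot, top_le_iff] at h; simp [h]
  | top => simp
  | coe x =>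
    intro hyoung
    exact EReal.sub_le_of_le_add' ((EReal.sub_le_iff_le_add (.inl (EReal.coe_ne_bot x))
      (.inl (EReal.coe_ne_top x))).1 hyoung)

theorem exists_affine_minorant_gt_of_neg {zs : Z} {s u r : ℝ} {z₀ : Z} (hs : s < 0)
    (hsep : ∀ z (t : ℝ), f z ≤ t → ⟪z, zs⟫_ℝ + s * t < u) (hz₀ : u < ⟪z₀, zs⟫_ℝ + s * r) :
    ∃ (ws : Z) (c : ℝ), (∀ z, ((⟪z, ws⟫_ℝ - c : ℝ) : EReal) ≤ f z) ∧ r < ⟪z₀, ws⟫_ℝ - c := by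
  have hws : ∀ z, ⟪z, (-s)⁻¹ • zs⟫_ℝ - u / -s = (⟪z, zs⟫_ℝ - u) / -s := fun z => by
    rw [real_inner_smul_right]; ring
  refine ⟨(-s)⁻¹ • zs, u / -s, fun z => EReal.le_of_forall_lt_iff_le.1 fun t ht => ?_, ?_⟩
  · have := hsep z t ht.le
    rw [hws, EReal.coe_le_coe_iff, div_le_iff₀ (neg_pos.2 hs)]
    linarith
  · rw [hws, lt_div_iff₀ (neg_pos.2 hs)]
    linarith

variable [CompleteSpace Z]

theorem ContinuousLinearMap.exists_inner_add_mul (φ : Z × ℝ →L[ℝ] ℝ) :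
    ∃ (zs : Z) (s : ℝ), ∀ z t, φ (z, t) = ⟪z, zs⟫_ℝ + s * t := by
  refine ⟨(InnerProductSpace.toDual ℝ Z).symm (φ.comp (.inl ℝ Z ℝ)), φ (0, 1), fun z t => ?_⟩
  rw [real_inner_comm, InnerProductSpace.toDual_symm_apply]
  have : ((z, t) : Z × ℝ) = (z, 0) + t • ((0 : Z), (1 : ℝ)) := by simp
  rw [this, map_add, map_smul, smul_eq_mul, mul_comm]
  rfl

theorem exists_separating_inner_add_mul (hconv : EConvexOn f) (hproper : EProper f)
    (hlsc : LowerSemicontinuous f) {z₀ : Z} {r : ℝ} (hr : (r : EReal) < f z₀) :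
    ∃ (zs : Z) (s u : ℝ), s ≤ 0 ∧ (∀ z (t : ℝ), f z ≤ t → ⟪z, zs⟫_ℝ + s * t < u) ∧
      u < ⟪z₀, zs⟫_ℝ + s * r := by
  obtain ⟨φ, u, hφ, hu⟩ := geometric_hahn_banach_closed_point (convex_realEpigraph hconv)
    (isClosed_realEpigraph hlsc) (x := (z₀, r)) (not_le.2 hr)
  obtain ⟨zs, s, hφzs⟩ := φ.exists_inner_add_mul
  have hsep : ∀ z (t : ℝ), f z ≤ t → ⟪z, zs⟫_ℝ + s * t < u := fun z t h => hφzs z t ▸ hφ (z, t) h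
  obtain ⟨z₁, t₁, hz₁⟩ := hproper.exists_eq_coe
  have hs : s ≤ 0 := nonpos_of_forall_add_mul_lt (t₁ := t₁) fun t ht =>
    hsep z₁ t (hz₁ ▸ EReal.coe_le_coe_iff.2 ht)
  exact ⟨zs, s, u, hs, hsep, hφzs z₀ r ▸ hu⟩

theorem exists_affine_minorant (hconv : EConvexOn f) (hproper : EProper f)
    (hlsc : LowerSemicontinuous f) :
    ∃ (ws : Z) (c : ℝ), ∀ z, ((⟪z, ws⟫_ℝ - c : ℝ) : EReal) ≤ f z := by
  obtain ⟨z₁, t₁, hz₁⟩ := hproper.exists_eq_coe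
  have hlt : ((t₁ - 1 : ℝ) : EReal) < f z₁ := hz₁ ▸ EReal.coe_lt_coe_iff.2 (by linarith)
  obtain ⟨zs, s, u, hs, hsep, hz₁u⟩ := exists_separating_inner_add_mul hconv hproper hlsc hlt
  have hs' : s ≠ 0 := by
    rintro rfl
    have := hsep z₁ t₁ hz₁.le
    simp only [zero_mul, add_zero] at this hz₁u
    linarith
  obtain ⟨ws, c, hmin, -⟩ := exists_affine_minorant_gt_of_neg (hs.lt_of_ne hs') hsep hz₁u
  exact ⟨ws, c, hmin⟩

theorem exists_affine_minorant_gt (hconv : EConvexOn f) (hproper : EProper f)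
    (hlsc : LowerSemicontinuous f) {z₀ : Z} {r : ℝ} (hr : (r : EReal) < f z₀) :
    ∃ (ws : Z) (c : ℝ), (∀ z, ((⟪z, ws⟫_ℝ - c : ℝ) : EReal) ≤ f z) ∧ r < ⟪z₀, ws⟫_ℝ - c := by
  obtain ⟨zs, s, u, hs, hsep, hz₀⟩ := exists_separating_inner_add_mul hconv hproper hlsc hr
  obtain hs | rfl := hs.lt_or_eq
  · exact exists_affine_minorant_gt_of_neg hs hsep hz₀
  -- a vertical separating hyperplane is tilted by adding a large multiple of it to a minorant
  simp only [zero_mul, add_zero] at hsep hz₀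
  obtain ⟨ws₀, c₀, hmin₀⟩ := exists_affine_minorant hconv hproper hlsc
  obtain ⟨M, hM⟩ := exists_nat_gt ((r - (⟪z₀, ws₀⟫_ℝ - c₀)) / (⟪z₀, zs⟫_ℝ - u))
  rw [div_lt_iff₀ (sub_pos.2 hz₀)] at hM
  refine ⟨ws₀ + (M : ℝ) • zs, c₀ + M * u, fun z => EReal.le_of_forall_lt_iff_le.1 fun t ht => ?_,
    ?_⟩
  · have h₁ := EReal.coe_lt_coe_iff.1 ((hmin₀ z).trans_lt ht)
    have h₂ := mul_le_mul_of_nonneg_left (hsep z t ht.le).le M.cast_nonneg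
    rw [EReal.coe_le_coe_iff, inner_add_right, real_inner_smul_right]
    linarith
  · rw [inner_add_right, real_inner_smul_right]
    linarith

theorem econj_econj_eq (hconv : EConvexOn f) (hproper : EProper f)
    (hlsc : LowerSemicontinuous f) (z₀ : Z) : econj (econj f) z₀ = f z₀ := by
  refine (econj_econj_le z₀).antisymm (EReal.ge_of_forall_gt_iff_ge.1 fun r hr => ?_)
  obtain ⟨ws, c, hmin, hr⟩ := exists_affine_minorant_gt hconv hproper hlsc hr
  calc (r : EReal) ≤ ((⟪z₀, ws⟫_ℝ - c : ℝ) : EReal) := EReal.coe_le_coe_iff.2 hr.le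
    _ ≤ ((⟪ws, z₀⟫_ℝ : ℝ) : EReal) - econj f ws := by
        rw [EReal.coe_sub, real_inner_comm]; exact EReal.sub_le_sub le_rfl (econj_le_coe hmin)
    _ ≤ econj (econj f) z₀ := le_iSup (fun zs => ((⟪zs, z₀⟫_ℝ : ℝ) : EReal) - econj f zs) ws

end FenchelMoreau

section Indicator

variable {Z W : Type*}

theorem indicatorE_prod_univ (A : Set Z) (p : Z × W) :
    indicatorE (A ×ˢ (Set.univ : Set W)) p = indicatorE A p.1 := by
  rw [Set.prod_univ]
  rfl

theorem iInf_add_indicatorE {f : Z → EReal} (hf : ∀ z, f z ≠ ⊥) (A : Set Z) :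
    ⨅ z, (f z + indicatorE A z) = ⨅ z ∈ A, f z := by
  refine iInf_congr fun z => ?_
  by_cases hz : z ∈ A <;> simp [indicatorE, hz, EReal.add_top_of_ne_bot (hf z)]

end Indicator

section PrimalDual

omit [CompleteSpace X] [CompleteSpace Y]

variable {F : X → EReal} {G : Y → EReal} {K : X →L[ℝ] Y}

theorem lagr_eq_add (x : X) (y : Y) :
    lagr F G K x y = F x + (((⟪K x, y⟫_ℝ : ℝ) : EReal) - econj G y) := by
  rw [lagr, sub_eq_add_neg, sub_eq_add_neg, add_assoc]

theorem iSup_lagr (hG : ∀ v, econj (econj G) v = G v) (x : X) :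
    ⨆ y, lagr F G K x y = F x + G (K x) := by
  simp_rw [lagr_eq_add, ← EReal.add_iSup, ← econj_econj_eq_iSup, hG]

theorem hatGap_prod_univ_eq (hG : ∀ v, econj (econj G) v = G v) {BX : Set X} {c : ℝ}
    (hc : ⨅ xb ∈ BX, (F xb + G (K xb)) = c) (x : X) :
    hatGap F G K (BX ×ˢ Set.univ) x = F x + G (K x) - c := by
  refine le_antisymm (iSup₂_le fun ⟨xb, yb⟩ ⟨hxb, _⟩ => ?_) ?_
  · set L := ⨅ y, lagGap F G K x y xb yb
    have hc_le : (c : EReal) ≤ F xb + G (K xb) := hc ▸ iInf₂_le xb hxb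
    -- `⨅ y, (a - g y) ≤ a - ⨆ y, g y` fails for `a = ⊤`, so `c` is moved to the left instead
    rw [EReal.le_sub_iff_add_le (.inl (EReal.coe_ne_bot c)) (.inl (EReal.coe_ne_top c))]
    calc L + c ≤ L + (F xb + G (K xb)) := add_le_add_right hc_le L
      _ = ⨆ y, (L + lagr F G K xb y) := by rw [← iSup_lagr hG, EReal.add_iSup]
      _ ≤ F x + G (K x) := iSup_le fun y => (EReal.add_le_of_le_sub (iInf_le _ y)).trans <|
          (le_iSup (lagr F G K x) yb).trans (iSup_lagr hG x).le
  · rw [← hc, EReal.sub_iInf]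
    refine iSup_le fun xb => ?_
    rw [EReal.sub_iInf]
    refine iSup_le fun hxb => ?_
    calc F x + G (K x) - (F xb + G (K xb))
        = ⨆ yb, (lagr F G K x yb - (F xb + G (K xb))) := by rw [← iSup_lagr hG x, EReal.iSup_sub]
      _ ≤ ⨆ yb, ⨅ y, lagGap F G K x y xb yb := iSup_mono fun yb => le_iInf fun y =>
          EReal.sub_le_sub le_rfl ((le_iSup (lagr F G K xb) y).trans (iSup_lagr hG xb).le)
      _ ≤ hatGap F G K (BX ×ˢ Set.univ) x :=
          iSup_le fun yb => le_iSup₂_of_le (xb, yb) ⟨hxb, trivial⟩ le_rfl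

theorem JBconj_zero (B : Set (X × Y)) : JBconj F G K B 0 = -⨅ p, JB F G K B p := by
  simp only [JBconj, Prod.fst_zero, Prod.snd_zero, inner_zero_right, add_zero, EReal.coe_zero,
    zero_sub, EReal.neg_iInf]

theorem JB_prod_univ (BX : Set X) (xb : X) (yb : Y) :
    JB F G K (BX ×ˢ Set.univ) (xb, yb) = F xb + G (K xb) + indicatorE BX xb := by
  rw [JB, indicatorE_prod_univ]

theorem iInf_JB_prod_univ (hP : ∀ x, F x + G (K x) ≠ ⊥) (BX : Set X) :
    ⨅ p, JB F G K (BX ×ˢ Set.univ) p = ⨅ xb ∈ BX, (F xb + G (K xb)) := by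
  simp only [iInf_prod, JB_prod_univ, iInf_const]
  exact iInf_add_indicatorE hP BX

theorem Gtilde_prod_univ (hG : ∀ v, econj (econj G) v = G v) (hP : ∀ x, F x + G (K x) ≠ ⊥)
    {BX : Set X} {c : ℝ} (hc : ⨅ xb ∈ BX, (F xb + G (K xb)) = c) (y' : Y) :
    Gtilde F G K (BX ×ˢ Set.univ) y' = G y' := by
  have hsup : ⨆ xb, ⨆ yb, (((⟪y', yb⟫_ℝ : ℝ) : EReal) - econj G yb
      - JB F G K (BX ×ˢ Set.univ) (xb, yb)) = G y' - c := by
    simp_rw [JB_prod_univ, ← EReal.iSup_sub, ← econj_econj_eq_iSup, hG, ← EReal.sub_iInf,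
      iInf_add_indicatorE hP, hc]
  rw [Gtilde, hsup, JBconj_zero, iInf_JB_prod_univ hP, hc, sub_eq_add_neg (G y' - c), neg_neg,
    EReal.sub_add_cancel]

end PrimalDual

theorem hatGap_prod_univ_general (F : X → EReal) (G : Y → EReal) (K : X →L[ℝ] Y)
    (BX : Set X)
    (hFproper : EProper F)
    (hGconv : EConvexOn G) (hGproper : EProper G) (hGlsc : LowerSemicontinuous G)
    (hfin : ∃ c : ℝ, (⨅ xb ∈ BX, (F xb + G (K xb))) = (c : EReal)) :
    (∀ y' : Y, Gtilde F G K (BX ×ˢ (Set.univ : Set Y)) y' = G y') ∧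
    (∀ x : X, hatGap F G K (BX ×ˢ (Set.univ : Set Y)) x
      = (F x + G (K x)) - ⨅ xb ∈ BX, (F xb + G (K xb))) := by
  obtain ⟨c, hc⟩ := hfin
  have hG := econj_econj_eq hGconv hGproper hGlsc
  have hP : ∀ x, F x + G (K x) ≠ ⊥ := fun x =>
    EReal.add_ne_bot_iff.2 ⟨hFproper.1 x, hGproper.1 (K x)⟩
  refine ⟨Gtilde_prod_univ hG hP hc, fun x => ?_⟩
  rw [hc]
  exact hatGap_prod_univ_eq hG hc x

/-- **Full dual comparison set** (Example 3.2): if `B = B_X × Y` then `G̃ = G`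
and the partial primal gap reduces to a difference of function values. -/
theorem hatGap_prod_univ (F : X → EReal) (G : Y → EReal) (K : X →L[ℝ] Y)
    (BX : Set X)
    (hFconv : EConvexOn F) (hFproper : EProper F) (hFlsc : LowerSemicontinuous F)
    (hGconv : EConvexOn G) (hGproper : EProper G) (hGlsc : LowerSemicontinuous G)
    (hBXne : BX.Nonempty)
    (hfin : ∃ c : ℝ, (⨅ xb ∈ BX, (F xb + G (K xb))) = (c : EReal)) :
    (∀ y' : Y, Gtilde F G K (BX ×ˢ (Set.univ : Set Y)) y' = G y') ∧
    (∀ x : X, hatGap F G K (BX ×ˢ (Set.univ : Set Y)) x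
      = (F x + G (K x)) - ⨅ xb ∈ BX, (F xb + G (K xb))) :=
  hatGap_prod_univ_general F G K BX hFproper hGconv hGproper hGlsc hfin
end
end

section
/- Upper bound G̃ ≤ G. Let X and Y be real Hilbert spaces, F : X → (−∞,∞] and G : Y → (−∞,∞] convex, proper, and lower semicontinuous, K : X → Y bounded linear, and B ⊂ X×Y such that inf_{(x̃,ỹ)∈X×Y} J_B(x̃,ỹ) is finite. Then G̃(y') ≤ G(y') for every y' ∈ Y. -/
open scoped InnerProductSpace

noncomputable section

variable {X Y : Type*}
  [NormedAddCommGroup X] [InnerProductSpace ℝ X] [CompleteSpace X]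
  [NormedAddCommGroup Y] [InnerProductSpace ℝ Y] [CompleteSpace Y]

/-!
Each term of the supremum defining `G̃(y')` is at most `G(y') − J_B(x̄,ȳ) ≤ G(y') − inf J_B` by the
Fenchel–Young inequality, while `−J_B*(0,0) ≤ inf J_B`; since `inf J_B` is finite, the two
occurrences cancel.
-/

/-- Unlike `EReal.sub_le_iff_le_add`, this needs no side conditions because `a` is finite. -/
theorem EReal.coe_sub_le_comm {a : ℝ} {b c : EReal} (h : (a : EReal) - b ≤ c) :
    (a : EReal) - c ≤ b := by
  induction b <;> induction c <;> simp_all [← EReal.coe_sub]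
  linarith

theorem inner_sub_econj_le {Z : Type*} [NormedAddCommGroup Z] [InnerProductSpace ℝ Z]
    (f : Z → EReal) (z zs : Z) : ((⟪z, zs⟫_ℝ : ℝ) : EReal) - econj f zs ≤ f z :=
  EReal.coe_sub_le_comm (le_iSup (fun w => ((⟪w, zs⟫_ℝ : ℝ) : EReal) - f w) z)

section

omit [CompleteSpace X] [CompleteSpace Y]

variable (F : X → EReal) (G : Y → EReal) (K : X →L[ℝ] Y) (B : Set (X × Y))

theorem neg_JBconj_zero_le_iInf_JB : -JBconj F G K B 0 ≤ ⨅ p, JB F G K B p :=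
  le_iInf fun p => EReal.neg_le.2 <| by
    simpa [JBconj] using le_iSup (fun q => -JB F G K B q) p

theorem iSup_inner_sub_econj_sub_JB_le {m : EReal} (hm : m ≤ ⨅ p, JB F G K B p) (y' : Y) :
    (⨆ xb : X, ⨆ yb : Y, ((⟪y', yb⟫_ℝ : ℝ) : EReal) - econj G yb - JB F G K B (xb, yb))
      ≤ G y' - m :=
  iSup₂_le fun _ yb => EReal.sub_le_sub (inner_sub_econj_le G y' yb) (hm.trans (iInf_le _ _))

end

theorem Gtilde_le_general (F : X → EReal) (G : Y → EReal) (K : X →L[ℝ] Y)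
    (B : Set (X × Y))
    (hfin : ∃ c : ℝ, (⨅ p : X × Y, JB F G K B p) = (c : EReal))
    (y' : Y) :
    Gtilde F G K B y' ≤ G y' := by
  obtain ⟨c, hc⟩ := hfin
  calc Gtilde F G K B y'
      = (⨆ xb : X, ⨆ yb : Y,
          ((⟪y', yb⟫_ℝ : ℝ) : EReal) - econj G yb - JB F G K B (xb, yb))
        + -JBconj F G K B 0 := sub_eq_add_neg _ _
    _ ≤ (G y' - c) + c :=
        add_le_add (iSup_inner_sub_econj_sub_JB_le F G K B hc.ge y')
          (hc ▸ neg_JBconj_zero_le_iInf_JB F G K B)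
    _ = G y' := EReal.sub_add_cancel

/-- **Upper bound `G̃ ≤ G`**: since `−J_B*(0,0) ≤ J_B(x̄,ȳ)` whenever
`inf J_B` is finite. -/
theorem Gtilde_le (F : X → EReal) (G : Y → EReal) (K : X →L[ℝ] Y)
    (B : Set (X × Y))
    (hFconv : EConvexOn F) (hFproper : EProper F) (hFlsc : LowerSemicontinuous F)
    (hGconv : EConvexOn G) (hGproper : EProper G) (hGlsc : LowerSemicontinuous G)
    (hfin : ∃ c : ℝ, (⨅ p : X × Y, JB F G K B p) = (c : EReal))
    (y' : Y) :
    Gtilde F G K B y' ≤ G y' :=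
  Gtilde_le_general F G K B hfin y'

end
end
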